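/- arXiv:2512.15450 — 2 statements merged into one kernel-verified Lean document; each statement's English description precedes it below -/
import Mathlib

section
/- Let K be unitary self-adjoint and ρ(a) = K a K. For operators D, a, b with b commuting with ρ(a) and with K (e.g., b in a commutant preserved by ρ), the twisted first-order condition is equivalent to the ordinary one: [[D, a]_ρ, b]_{ρ} = K [[K D, a], b] whenever ρ(b) = b. In particular [[D,a]_ρ, b]_ρ = 0 if and only if [[K D, a], b] = 0. -/
/-- For `b` with `ρ(b) = b` (i.e. `b` commutes with `K`), the twisted first-order
condition agrees with the ordinary one: `[[D,a]_ρ, b]_ρ = K [[K D, a], b]`, and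
in particular `[[D,a]_ρ, b]_ρ = 0 ↔ [[K D, a], b] = 0`. -/
theorem twisted_first_order_condition {H : Type*} [NormedAddCommGroup H]
    [InnerProductSpace ℂ H] [CompleteSpace H]
    (K : H →L[ℂ] H) (hKsa : star K = K)
    (hK1 : K * star K = 1) (hK2 : star K * K = 1) :
    ∀ D a b : H →L[ℂ] H, K * b = b * K →
      ((D * a - (K * a * K) * D) * b - (K * b * K) * (D * a - (K * a * K) * D) =
          K * (((K * D) * a - a * (K * D)) * b - b * ((K * D) * a - a * (K * D))) ∧
        ((D * a - (K * a * K) * D) * b - (K * b * K) * (D * a - (K * a * K) * D) = 0 ↔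
          ((K * D) * a - a * (K * D)) * b - b * ((K * D) * a - a * (K * D)) = 0)) := by
  intro D a b hb
  rw [hKsa] at hK1
  have hbK : K * b * K = b := by rw [hb, mul_assoc, hK1, mul_one]
  set Y := (K * D) * a - a * (K * D) with hY
  have hX : K * Y = D * a - (K * a * K) * D := by
    simp only [hY, mul_sub, ← mul_assoc, hK1, one_mul]
  have heq : (D * a - (K * a * K) * D) * b - (K * b * K) * (D * a - (K * a * K) * D)
      = K * (Y * b - b * Y) := by
    have h2 : K * (Y * b) = (K * Y) * b := (mul_assoc K Y b).symm
    have h3 : K * (b * Y) = b * (K * Y) := by rw [← mul_assoc, hb, mul_assoc]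
    conv_rhs => rw [mul_sub, h2, h3, hX]
    rw [hbK]
  refine ⟨heq, heq ▸ ?_⟩
  constructor
  · intro h
    have := congrArg (fun x => K * x) h
    simpa [← mul_assoc, hK1] using this
  · intro h
    rw [h, mul_zero]
end

section
/- Let K be unitary self-adjoint on H, and define c̃(v) := K c(v) where c is a Clifford representation of (V, g) with K c(v) K = c(rv) for a g-isometric involution r, and where g_R(u,v) := g(u, rv) is positive definite. Then the generalized Clifford relation holds in any g-orthonormal basis {e_a} with g(e_a, e_a) = g_a ∈ {±1}: setting γ̃^a := c̃(e_a) and s_{ab} := g_a g_b, one has γ̃^a γ̃^b + s_{ab} γ̃^b γ̃^a = 2 g_R(e_a, e_b)·1 for all a, b. -/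
open Matrix

/-- Generalized (twisted) Clifford relation: for `γ̃^a := K c(e_a)` with
`K c(v) K = c(r v)`, `r e_a = g_a e_a`, one has
`γ̃^a γ̃^b + s_{ab} γ̃^b γ̃^a = 2 g_R(e_a, e_b)·1` where `s_{ab} = g_a g_b` and
`g_R(u,v) = g(u, r v)` is positive definite. -/
theorem generalized_Clifford_relation
    {V : Type*} [AddCommGroup V] [Module ℝ V] (m : ℕ)
    (g : LinearMap.BilinForm ℝ V) (hsymm : ∀ u v : V, g u v = g v u)
    (e : Fin (2 * m) → V) (gsign : Fin (2 * m) → ℝ)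
    (hgsign : ∀ a, gsign a = 1 ∨ gsign a = -1)
    (horth : ∀ a b, g (e a) (e b) = if a = b then gsign a else 0)
    (c : V →ₗ[ℝ] Matrix (Fin (2 ^ m)) (Fin (2 ^ m)) ℂ)
    (hcliff : ∀ u v : V,
      c u * c v + c v * c u = ((2 * g u v : ℝ) : ℂ) • (1 : Matrix (Fin (2 ^ m)) (Fin (2 ^ m)) ℂ))
    (r : V →ₗ[ℝ] V) (hr : ∀ a, r (e a) = gsign a • e a)
    (hr2 : ∀ v, r (r v) = v) (hriso : ∀ u v, g (r u) (r v) = g u v)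
    (hpos : ∀ v : V, v ≠ 0 → 0 < g v (r v))
    (K : Matrix (Fin (2 ^ m)) (Fin (2 ^ m)) ℂ)
    (hKsa : Kᴴ = K) (hK2 : K * K = 1)
    (hKr : ∀ v : V, K * c v * K = c (r v)) :
    ∀ a b : Fin (2 * m),
      (K * c (e a)) * (K * c (e b)) +
          ((gsign a * gsign b : ℝ) : ℂ) • ((K * c (e b)) * (K * c (e a))) =
        ((2 * g (e a) (r (e b)) : ℝ) : ℂ) • (1 : Matrix (Fin (2 ^ m)) (Fin (2 ^ m)) ℂ) := by
  intro a b
  have h1 : ∀ x, K * c (e x) * K = gsign x • c (e x) := by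
    intro x; rw [hKr, hr, _root_.map_smul]
  have hsq : ∀ x, gsign x * gsign x = 1 := by
    intro x; rcases hgsign x with h | h <;> rw [h] <;> ring
  have ha : (K * c (e a)) * (K * c (e b)) = gsign a • (c (e a) * c (e b)) := by
    rw [show (K * c (e a)) * (K * c (e b)) = (K * c (e a) * K) * c (e b) from
      (mul_assoc _ _ _).symm, h1, smul_mul_assoc]
  have hb : (K * c (e b)) * (K * c (e a)) = gsign b • (c (e b) * c (e a)) := by
    rw [show (K * c (e b)) * (K * c (e a)) = (K * c (e b) * K) * c (e a) from
      (mul_assoc _ _ _).symm, h1, smul_mul_assoc]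
  have hcoe : ∀ (x : ℝ) (M : Matrix (Fin (2 ^ m)) (Fin (2 ^ m)) ℂ),
      ((x : ℂ)) • M = x • M := by
    intro x M; rw [← Complex.coe_algebraMap, algebraMap_smul]
  rw [ha, hb, hcoe, smul_smul, hcoe]
  have : gsign a * gsign b * gsign b = gsign a := by rw [mul_assoc, hsq, mul_one]
  rw [this, ← smul_add, hcliff, hcoe, smul_smul]
  congr 1
  rw [hr b, _root_.map_smul, smul_eq_mul, horth]
  by_cases h : a = b
  · subst h; simp only [if_pos rfl]; rcases hgsign a with h | h <;> rw [h] <;> ring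
  · simp only [if_neg h]; ring
end
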